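/- arXiv:1906.09477 — 4 statements merged into one kernel-verified Lean document; each statement's English description precedes it below -/
import Mathlib

section
/- Let u(x) = (1/2)·x·(3 − x²) and let uₙ denote the n-fold composition of u with itself. Then for every x ∈ [−1, 1] and every n ≥ 1, |uₙ(x) − sgn(x)| ≤ |sgn(x) − x|^(2^(n/2)). -/
/-!
Near the fixed point `1` the map `u x = x (3 - x²) / 2` (`newtonSchulz`) is conjugate, via
`x = 1 - y`, to `ũ y = y² (3 - y) / 2` (`newtonSchulzError`), and `ũ y ≤ y ^ (3/2) ≤ y ^ √2` on `[0, 1]`. Iterating this bound gives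
`1 - uₙ x ≤ (1 - x) ^ (√2 ^ n) = (1 - x) ^ (2 ^ (n / 2))` for `x ∈ [0, 1]`; the case `x < 0`
follows because `u` is odd.
-/

open Set

noncomputable def newtonSchulz (x : ℝ) : ℝ := x * (3 - x ^ 2) / 2

noncomputable def newtonSchulzError (y : ℝ) : ℝ := y ^ 2 * (3 - y) / 2

lemma newtonSchulz_zero : newtonSchulz 0 = 0 := by
  norm_num [newtonSchulz]

lemma commute_newtonSchulz_neg : Function.Commute newtonSchulz Neg.neg := fun x => by
  simp only [newtonSchulz]
  ring

lemma semiconj_one_sub_newtonSchulz :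
    Function.Semiconj (fun x : ℝ => 1 - x) newtonSchulz newtonSchulzError := fun x => by
  simp only [newtonSchulz, newtonSchulzError]
  ring

lemma mapsTo_newtonSchulzError : MapsTo newtonSchulzError (Icc 0 1) (Icc 0 1) := by
  rintro y ⟨hy0, hy1⟩
  simp only [newtonSchulzError, mem_Icc]
  constructor
  · have : 0 ≤ 3 - y := by linarith
    positivity
  · nlinarith [mul_nonneg (sq_nonneg (y - 1)) (by linarith : 0 ≤ y + 1)]

lemma newtonSchulzError_le_rpow_three_halves {y : ℝ} (hy : y ∈ Icc 0 1) :
    newtonSchulzError y ≤ y ^ (3 / 2 : ℝ) := by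
  have hy0 := hy.1
  have herr := (mapsTo_newtonSchulzError hy).1
  -- Squaring, the claim is `y ^ 4 (3 - y)² ≤ 4 y ^ 3`, i.e. `y (y - 1)² (y - 4) ≤ 0`.
  refine (pow_le_pow_iff_left₀ herr (by positivity) two_ne_zero).1 ?_
  rw [← Real.rpow_mul_natCast hy0, show (3 / 2 : ℝ) * (2 : ℕ) = (3 : ℕ) by norm_num,
    Real.rpow_natCast, newtonSchulzError]
  nlinarith [mul_nonneg (mul_nonneg hy0 (sq_nonneg (y - 1))) (by linarith [hy.2] : 0 ≤ 4 - y)]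

lemma newtonSchulzError_le_rpow_sqrt_two {y : ℝ} (hy : y ∈ Icc 0 1) :
    newtonSchulzError y ≤ y ^ √2 := by
  have hsqrt : √2 ≤ 3 / 2 := by
    rw [Real.sqrt_le_left (by norm_num)]
    norm_num
  calc newtonSchulzError y ≤ y ^ (3 / 2 : ℝ) := newtonSchulzError_le_rpow_three_halves hy
    _ ≤ y ^ √2 := Real.rpow_le_rpow_of_exponent_ge' hy.1 hy.2 (Real.sqrt_nonneg 2) hsqrt

lemma iterate_le_rpow_pow_of_le_rpow {g : ℝ → ℝ} {p : ℝ} (hp : 0 ≤ p)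
    (hg : MapsTo g (Icc 0 1) (Icc 0 1)) (hgp : ∀ y ∈ Icc 0 1, g y ≤ y ^ p) (n : ℕ) :
    ∀ y ∈ Icc 0 1, g^[n] y ≤ y ^ (p ^ n) := by
  induction n with
  | zero => simp
  | succ n ih =>
    intro y hy
    have hgn := hg.iterate n hy
    calc g^[n + 1] y = g (g^[n] y) := Function.iterate_succ_apply' g n y
      _ ≤ (g^[n] y) ^ p := hgp _ hgn
      _ ≤ (y ^ (p ^ n)) ^ p := Real.rpow_le_rpow hgn.1 (ih y hy) hp
      _ = y ^ (p ^ (n + 1)) := by rw [← Real.rpow_mul hy.1, pow_succ]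

lemma one_sub_iterate_newtonSchulz (n : ℕ) (x : ℝ) :
    1 - newtonSchulz^[n] x = newtonSchulzError^[n] (1 - x) :=
  (semiconj_one_sub_newtonSchulz.iterate_right n) x

lemma one_sub_iterate_newtonSchulz_le {x : ℝ} (hx : x ∈ Icc 0 1) (n : ℕ) :
    1 - newtonSchulz^[n] x ≤ (1 - x) ^ ((2 : ℝ) ^ ((n : ℝ) / 2)) := by
  have hy : 1 - x ∈ Icc (0 : ℝ) 1 := ⟨by linarith [hx.2], by linarith [hx.1]⟩
  have hexp : √2 ^ n = (2 : ℝ) ^ ((n : ℝ) / 2) := by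
    rw [Real.sqrt_eq_rpow, ← Real.rpow_natCast, ← Real.rpow_mul zero_le_two, one_div_mul_eq_div]
  rw [one_sub_iterate_newtonSchulz, ← hexp]
  exact iterate_le_rpow_pow_of_le_rpow (Real.sqrt_nonneg 2) mapsTo_newtonSchulzError
    (fun y hy => newtonSchulzError_le_rpow_sqrt_two hy) n _ hy

lemma abs_iterate_newtonSchulz_sub_sign_le {x : ℝ} (hx : x ∈ Icc 0 1) (n : ℕ) :
    |newtonSchulz^[n] x - Real.sign x| ≤ |Real.sign x - x| ^ ((2 : ℝ) ^ ((n : ℝ) / 2)) := by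
  rcases hx.1.eq_or_lt with rfl | hpos
  · simp [Function.iterate_fixed newtonSchulz_zero, Real.rpow_nonneg]
  · have h1x : 1 - x ∈ Icc (0 : ℝ) 1 := ⟨by linarith [hx.2], by linarith⟩
    have hle : newtonSchulz^[n] x ≤ 1 := by
      have := (mapsTo_newtonSchulzError.iterate n h1x).1
      rw [← one_sub_iterate_newtonSchulz] at this
      linarith
    rw [Real.sign_of_pos hpos, abs_sub_comm, abs_of_nonneg (sub_nonneg.2 hle),
      abs_of_nonneg (sub_nonneg.2 hx.2)]
    exact one_sub_iterate_newtonSchulz_le hx n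

theorem stmt0_general (n : ℕ) (x : ℝ) (hx : x ∈ Set.Icc (-1 : ℝ) 1) :
    |(fun y : ℝ => y * (3 - y ^ 2) / 2)^[n] x - Real.sign x| ≤
      |Real.sign x - x| ^ ((2 : ℝ) ^ ((n : ℝ) / 2)) := by
  change |newtonSchulz^[n] x - Real.sign x| ≤ _
  rcases le_total 0 x with hx0 | hx0
  · exact abs_iterate_newtonSchulz_sub_sign_le ⟨hx0, hx.2⟩ n
  · have h := abs_iterate_newtonSchulz_sub_sign_le (x := -x) ⟨neg_nonneg.2 hx0, by linarith [hx.1]⟩ n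
    rwa [(commute_newtonSchulz_neg.iterate_left n).eq, Real.sign_neg, neg_sub_neg, neg_sub_neg,
      abs_sub_comm, abs_sub_comm x] at h

/-- Let u(x) = x(3 − x²)/2 and uₙ its n-fold iterate. For x ∈ [−1,1], n ≥ 1:
|uₙ(x) − sgn(x)| ≤ |sgn(x) − x|^(2^(n/2)). -/
theorem stmt0 (n : ℕ) (hn : 1 ≤ n) (x : ℝ) (hx : x ∈ Set.Icc (-1 : ℝ) 1) :
    |(fun y : ℝ => y * (3 - y ^ 2) / 2)^[n] x - Real.sign x| ≤
      |Real.sign x - x| ^ ((2 : ℝ) ^ ((n : ℝ) / 2)) :=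
  stmt0_general n x hx
end

section
/- Let ũ(y) = (1/2)·y²·(3 − y). Then for all y ∈ [0, 1], ũ(y) ≤ y^√2. -/
/-!
Since `√2 ≤ 3/2` and `0 ≤ y ≤ 1`, we have `y ^ (3/2) ≤ y ^ √2`, so it suffices to bound `ũ` by
`y ^ (3/2)`. With `s = √y` this becomes the polynomial inequality `s⁴ (3 - s²) / 2 ≤ s³`, whose
defect is `s³ (s - 1)² (s + 2) / 2 ≥ 0`.
-/

lemma sq_mul_three_sub_div_two_le_rpow_three_halves {y : ℝ} (hy : 0 ≤ y) :
    y ^ 2 * (3 - y) / 2 ≤ y ^ (3 / 2 : ℝ) := by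
  set s := Real.sqrt y
  have hs : 0 ≤ s := Real.sqrt_nonneg y
  have hsy : s ^ 2 = y := Real.sq_sqrt hy
  have hpow : y ^ (3 / 2 : ℝ) = s ^ 3 := by
    rw [← hsy, ← Real.rpow_natCast, ← Real.rpow_mul hs]
    norm_num
  rw [hpow, ← hsy]
  nlinarith [mul_nonneg (mul_nonneg (pow_nonneg hs 3) (sq_nonneg (s - 1))) (by linarith : 0 ≤ s + 2)]

lemma sqrt_two_le_three_halves : Real.sqrt 2 ≤ 3 / 2 :=
  (Real.sqrt_le_left (by norm_num)).2 (by norm_num)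

/-- Let ũ(y) = y²(3 − y)/2. Then for all y ∈ [0,1], ũ(y) ≤ y^√2. -/
theorem stmt1 (y : ℝ) (hy : y ∈ Set.Icc (0 : ℝ) 1) :
    y ^ 2 * (3 - y) / 2 ≤ y ^ Real.sqrt 2 :=
  calc y ^ 2 * (3 - y) / 2 ≤ y ^ (3 / 2 : ℝ) := sq_mul_three_sub_div_two_le_rpow_three_halves hy.1
    _ ≤ y ^ Real.sqrt 2 :=
      Real.rpow_le_rpow_of_exponent_ge' hy.1 hy.2 (Real.sqrt_nonneg 2) sqrt_two_le_three_halves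
end

section
/- Let v(x) = 2 − 3x², I₀ = [1/2, 1], I₁ = [−1, −1/2]. For any binary sequence b₁, …, bₙ ∈ {0,1} there exists a closed interval I ⊂ [−1, 1] of length at least 6^(−n) such that for every initial value w₁ ∈ I, the sequence defined by w_k = v(w_{k−1}) satisfies w_k ∈ I_{b_k} for all k = 1, …, n. -/
/-!
Each branch of `v x = 2 - 3 x²` on `[1/2, 1]` and on `[-1, -1/2]` covers `[-1, 1]`, and
`|v'| ≤ 6` there. So any target interval `[c, d] ⊆ [-1, 1]` pulls back under either branch to an
interval at least `(d - c) / 6` long. Pulling `[-1, 1]` back along the prescribed bits, last bit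
first, yields an interval of length at least `2 · 6⁻ⁿ` all of whose points follow the itinerary.
-/

open Set

theorem exists_Icc_forall_iterate_mem {f : ℝ → ℝ} {J : Bool → Set ℝ} {a₀ b₀ L : ℝ}
    (hL : 0 < L) (hab : a₀ ≤ b₀) (hJ : ∀ β, J β ⊆ Icc a₀ b₀)
    (hpull : ∀ β c d, a₀ ≤ c → c ≤ d → d ≤ b₀ →
      ∃ p q, Icc p q ⊆ J β ∧ d - c ≤ L * (q - p) ∧ MapsTo f (Icc p q) (Icc c d))
    (n : ℕ) (b : ℕ → Bool) :
    ∃ p q, Icc p q ⊆ Icc a₀ b₀ ∧ b₀ - a₀ ≤ L ^ n * (q - p) ∧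
      ∀ w ∈ Icc p q, ∀ k < n, f^[k] w ∈ J (b k) := by
  induction n generalizing b with
  | zero => exact ⟨a₀, b₀, subset_rfl, by simp, fun _ _ k hk => absurd hk k.not_lt_zero⟩
  | succ n ih =>
    obtain ⟨c, d, hcd_sub, hcd_len, hcd_it⟩ := ih fun k => b (k + 1)
    have hcd : c ≤ d := sub_nonneg.mp <|
      nonneg_of_mul_nonneg_right ((sub_nonneg.mpr hab).trans hcd_len) (pow_pos hL n)
    obtain ⟨p, q, hpq_sub, hpq_len, hpq_maps⟩ :=
      hpull (b 0) c d (hcd_sub ⟨le_rfl, hcd⟩).1 hcd (hcd_sub ⟨hcd, le_rfl⟩).2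
    refine ⟨p, q, hpq_sub.trans (hJ _), ?_, ?_⟩
    · calc b₀ - a₀ ≤ L ^ n * (d - c) := hcd_len
        _ ≤ L ^ n * (L * (q - p)) := by gcongr
        _ = L ^ (n + 1) * (q - p) := by ring
    · rintro w hw (_ | k) hk
      · exact hpq_sub hw
      · rw [Function.iterate_succ_apply]
        exact hcd_it (f w) (hpq_maps hw) k (Nat.lt_of_succ_lt_succ hk)

theorem exists_Icc_pullback_pos {c d : ℝ} (hc : -1 ≤ c) (hcd : c ≤ d) (hd : d ≤ 1) :
    ∃ p q, Icc p q ⊆ Icc (1/2 : ℝ) 1 ∧ d - c ≤ 6 * (q - p) ∧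
      MapsTo (fun x : ℝ => 2 - 3 * x ^ 2) (Icc p q) (Icc c d) := by
  set s := √((2 - d) / 3)
  set t := √((2 - c) / 3)
  have hs : s ^ 2 = (2 - d) / 3 := Real.sq_sqrt (by linarith)
  have ht : t ^ 2 = (2 - c) / 3 := Real.sq_sqrt (by linarith)
  have hs0 : 0 ≤ s := Real.sqrt_nonneg _
  have ht0 : 0 ≤ t := Real.sqrt_nonneg _
  have ht1 : t ≤ 1 := by nlinarith
  have hst : s ≤ t := Real.sqrt_le_sqrt (by linarith)
  refine ⟨s, t, fun x ⟨hsx, hxt⟩ => ⟨?_, hxt.trans ht1⟩, ?_, fun x ⟨hsx, hxt⟩ => ⟨?_, ?_⟩⟩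
  · nlinarith
  · -- `d - c = 3 (t - s) (t + s)` with `t + s ≤ 2`
    nlinarith [mul_le_mul_of_nonneg_left (by linarith : t + s ≤ 2) (sub_nonneg.mpr hst)]
  · show c ≤ 2 - 3 * x ^ 2
    nlinarith
  · show 2 - 3 * x ^ 2 ≤ d
    nlinarith

theorem exists_Icc_pullback_neg {c d : ℝ} (hc : -1 ≤ c) (hcd : c ≤ d) (hd : d ≤ 1) :
    ∃ p q, Icc p q ⊆ Icc (-1 : ℝ) (-1/2) ∧ d - c ≤ 6 * (q - p) ∧
      MapsTo (fun x : ℝ => 2 - 3 * x ^ 2) (Icc p q) (Icc c d) := by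
  obtain ⟨p, q, hsub, hlen, hmaps⟩ := exists_Icc_pullback_pos hc hcd hd
  refine ⟨-q, -p, fun x hx => ?_, by linarith, fun x hx => ?_⟩
  · have := hsub (show -x ∈ Icc p q from ⟨by linarith [hx.2], by linarith [hx.1]⟩)
    exact ⟨by linarith [this.2], by linarith [this.1]⟩
  · simpa using hmaps (show -x ∈ Icc p q from ⟨by linarith [hx.2], by linarith [hx.1]⟩)

/-- Bit extraction via the polynomial dynamical system v(x) = 2 − 3x². For any binary
sequence b₁,…,bₙ there is an interval I ⊆ [−1,1] of length ≥ 6^(−n) such that for any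
initial value w₁ ∈ I, the iterates w_k = v(w_{k−1}) satisfy w_k ∈ I_{b_k} for k = 1,…,n. -/
theorem stmt4 (n : ℕ) (b : ℕ → Bool) :
    ∃ p q : ℝ, Set.Icc p q ⊆ Set.Icc (-1 : ℝ) 1 ∧ (6 : ℝ) ^ (-(n : ℤ)) ≤ q - p ∧
      ∀ w₁ ∈ Set.Icc p q, ∀ k, 1 ≤ k → k ≤ n →
        (fun x : ℝ => 2 - 3 * x ^ 2)^[k - 1] w₁ ∈
          (if b k then Set.Icc (-1 : ℝ) (-1/2) else Set.Icc (1/2 : ℝ) 1) := by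
  have hJ (β : Bool) : (if β then Icc (-1 : ℝ) (-1/2) else Icc (1/2 : ℝ) 1) ⊆ Icc (-1) 1 := by
    cases β <;> exact Icc_subset_Icc (by norm_num) (by norm_num)
  have hpull (β : Bool) (c d : ℝ) (hc : -1 ≤ c) (hcd : c ≤ d) (hd : d ≤ 1) :
      ∃ p q, Icc p q ⊆ (if β then Icc (-1 : ℝ) (-1/2) else Icc (1/2 : ℝ) 1) ∧
        d - c ≤ 6 * (q - p) ∧ MapsTo (fun x : ℝ => 2 - 3 * x ^ 2) (Icc p q) (Icc c d) := by
    cases β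
    · exact exists_Icc_pullback_pos hc hcd hd
    · exact exists_Icc_pullback_neg hc hcd hd
  obtain ⟨p, q, hsub, hlen, hit⟩ :=
    exists_Icc_forall_iterate_mem (by norm_num) (by norm_num) hJ hpull n fun k => b (k + 1)
  refine ⟨p, q, hsub, ?_, fun w hw k hk1 hkn => ?_⟩
  · rw [zpow_neg, zpow_natCast, inv_le_iff_one_le_mul₀ (by positivity)]
    linarith
  · obtain ⟨j, rfl⟩ := Nat.exists_eq_add_of_le' hk1
    simpa using hit w hw j (by omega)
end

section
/- Let σ : ℝ → ℝ be 2-periodic, Lipschitz with constant c_σ, with max σ = 1, min σ = −1. Fix a > 0 and let w*₁, …, w*_R ∈ [−1,1]. Then there exists w′₁ ∈ [−1,1] such that the sequence defined by w′_k = σ(a·w′_{k−1}) for k ≥ 2 satisfies |w*_k − w′_k| < 2/a for all k = 1, …, R. -/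
/-!
Since σ is continuous with extreme values ±1, it takes every value of [-1, 1], so the
`2 / a`-periodic map `t ↦ σ (a * t)` takes every such value on every half-open interval of
length `2 / a`. For `a ≥ 1` one such interval inside [-1, 1] lies within `2 / a` of any given
`w*₁`, so an initial value of the sequence for the tail `w*₂, …, w*_R` can be pulled back to a
suitable `w′₁`; induction on `R` finishes. For `a < 1` everything lies in [-1, 1], whose
diameter is `2 < 2 / a`.
-/

open Set Function

theorem Function.Periodic.exists_mem_Icc_dist_lt_eq {β : Type*} {f : ℝ → β} {p l u x : ℝ}
    {v : β} (hf : Periodic f p) (hp : 0 < p) (hlu : l + p ≤ u) (hx : x ∈ Icc l u)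
    (hv : v ∈ range f) : ∃ t ∈ Icc l u, dist x t < p ∧ f t = v := by
  obtain ⟨y, rfl⟩ := hv
  simp only [Real.dist_eq]
  by_cases hxp : x + p ≤ u
  · obtain ⟨t, ⟨hxt, htx⟩, hyt⟩ := hf.exists_mem_Ico hp y x
    exact ⟨t, ⟨by linarith [hx.1], by linarith⟩,
      abs_sub_lt_iff.2 ⟨by linarith, by linarith⟩, hyt.symm⟩
  · obtain ⟨t, ⟨hut, htu⟩, hyt⟩ := hf.exists_mem_Ioc hp y (u - p)
    exact ⟨t, ⟨by linarith, by linarith⟩,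
      abs_sub_lt_iff.2 ⟨by linarith [hx.2], by linarith [not_le.1 hxp]⟩, hyt.symm⟩

theorem exists_forall_dist_iterate_lt {α : Type*} [PseudoMetricSpace α] {f : α → α}
    {S : Set α} {δ : ℝ} (hS : S.Nonempty)
    (hf : ∀ x ∈ S, ∀ v ∈ S, ∃ t ∈ S, dist x t < δ ∧ f t = v) (R : ℕ) {w : ℕ → α}
    (hw : ∀ k, 1 ≤ k → k ≤ R → w k ∈ S) :
    ∃ w₁ ∈ S, ∀ k, 1 ≤ k → k ≤ R → dist (w k) (f^[k - 1] w₁) < δ := by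
  induction R generalizing w with
  | zero =>
    obtain ⟨x, hx⟩ := hS
    exact ⟨x, hx, fun k hk hkR => absurd hk (by omega)⟩
  | succ R ih =>
    obtain ⟨v, hvS, hv⟩ := ih (w := fun k => w (k + 1))
      fun k hk hkR => hw (k + 1) (by omega) (by omega)
    obtain ⟨t, htS, hwt, hft⟩ := hf (w 1) (hw 1 le_rfl (by omega)) v hvS
    refine ⟨t, htS, fun k hk hkR => ?_⟩
    obtain rfl | ⟨j, rfl⟩ : k = 1 ∨ ∃ j, k = j + 2 := by
      rcases k with _ | _ | j <;> simp_all
    · exact hwt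
    · simpa [iterate_succ_apply, hft] using hv (j + 1) (by omega) (by omega)

/-- Generating R prescribed values (up to 2/a) by iterating w ↦ σ(a·w) from a single
initial weight, where σ is 2-periodic, Lipschitz, with max σ = 1 and min σ = −1. -/
theorem stmt8 (σ : ℝ → ℝ) (cσ : ℝ)
    (hper : ∀ x, σ (x + 2) = σ x)
    (hlip : ∀ x y, |σ x - σ y| ≤ cσ * |x - y|)
    (hub : ∀ x, σ x ≤ 1) (hmax : ∃ x, σ x = 1)
    (hlb : ∀ x, -1 ≤ σ x) (hmin : ∃ x, σ x = -1)
    (a : ℝ) (ha : 0 < a) (R : ℕ) (wstar : ℕ → ℝ)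
    (hw : ∀ k, 1 ≤ k → k ≤ R → wstar k ∈ Set.Icc (-1 : ℝ) 1) :
    ∃ w₁ ∈ Set.Icc (-1 : ℝ) 1, ∀ k, 1 ≤ k → k ≤ R →
      |wstar k - (fun t : ℝ => σ (a * t))^[k - 1] w₁| < 2 / a := by
  have hσ : Continuous σ :=
    (LipschitzWith.of_dist_le' (K := cσ) (by simpa only [Real.dist_eq] using hlip)).continuous
  have hσrange : Icc (-1) 1 ⊆ range σ := by
    obtain ⟨x₁, hx₁⟩ := hmax
    obtain ⟨x₀, hx₀⟩ := hmin
    simpa only [hx₀, hx₁] using intermediate_value_univ x₀ x₁ hσ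
  set f := fun t : ℝ => σ (a * t)
  simp_rw [← Real.dist_eq]
  rcases lt_or_ge a 1 with ha1 | ha1
  · have hf : MapsTo f (Icc (-1) 1) (Icc (-1) 1) := fun t _ => ⟨hlb _, hub _⟩
    refine ⟨0, by norm_num, fun k hk hkR => ?_⟩
    calc dist (wstar k) (f^[k - 1] 0) ≤ 1 - (-1) :=
          Real.dist_le_of_mem_Icc (hw k hk hkR) (hf.iterate _ (by norm_num))
      _ < 2 / a := by rw [lt_div_iff₀ ha]; linarith
  · have hfper : Periodic f (2 / a) := by
      simpa only [div_eq_inv_mul] using Periodic.const_mul hper a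
    have hfrange : Icc (-1) 1 ⊆ range f := fun v hv => by
      obtain ⟨s, rfl⟩ := hσrange hv
      exact ⟨s / a, by simp only [f, mul_div_cancel₀ s ha.ne']⟩
    have hwidth : -1 + 2 / a ≤ 1 := by
      linarith [(div_le_iff₀ ha).2 (by linarith : (2 : ℝ) ≤ 2 * a)]
    exact exists_forall_dist_iterate_lt ⟨0, by norm_num⟩
      (fun x hx v hv => hfper.exists_mem_Icc_dist_lt_eq (by positivity) hwidth hx (hfrange hv))
      R hw
end
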